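/- For the 5-qubit code with normal per-qubit error density with parameter σ, the syndrome probabilities satisfy E[P₀] = (1 + 15σ⁸)/16 and E[P_s] = (1 - σ⁸)/16 for each 1 ≤ s ≤ 15; consequently E[P₀] + 15·E[P₁] = 1. -/

import Mathlib

open Real

/-- The normal error density with parameter `σ`. -/
noncomputable def normalDensity (σ : ℝ) (θ₀ : ℝ) : ℝ :=
  (1 / (2 * π ^ 2)) * (1 - σ ^ 2) / (1 + σ ^ 2 - 2 * σ * Real.cos θ₀) ^ 2

/-- `e₁ = Ē[cos²θ₀ sin²θ₀]` for the normal density. -/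
noncomputable def e₁ (σ : ℝ) : ℝ :=
  ∫ θ₀ in (0:ℝ)..π, normalDensity σ θ₀ * (Real.cos θ₀ ^ 2 * Real.sin θ₀ ^ 2)

/-- `e₂ = Ē[sin⁴θ₀]` for the normal density. -/
noncomputable def e₂ (σ : ℝ) : ℝ :=
  ∫ θ₀ in (0:ℝ)..π, normalDensity σ θ₀ * Real.sin θ₀ ^ 4

/-- `E[P₀]`, the probability of measuring syndrome `0`. -/
noncomputable def EP0 (σ : ℝ) : ℝ :=
  (4 * π) ^ 5 * (e₁ σ ^ 5 + (30 / 3 ^ 3) * e₁ σ ^ 2 * e₂ σ ^ 3 +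
    (15 / 3 ^ 4) * e₁ σ * e₂ σ ^ 4 + (18 / 3 ^ 5) * e₂ σ ^ 5)

/-- `E[P_s]` for `1 ≤ s ≤ 15`, the probability of measuring a nonzero syndrome `s`. -/
noncomputable def EPs (σ : ℝ) : ℝ :=
  (4 * π) ^ 5 * ((1 / 3) * e₁ σ ^ 4 * e₂ σ + (6 / 3 ^ 2) * e₁ σ ^ 3 * e₂ σ ^ 2 +
    (16 / 3 ^ 3) * e₁ σ ^ 2 * e₂ σ ^ 3 + (26 / 3 ^ 4) * e₁ σ * e₂ σ ^ 4 +
    (15 / 3 ^ 5) * e₂ σ ^ 5)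

/-!
With `D = 1 + σ² - 2σ cos θ`, the integrands of `e₁` and `e₂` are rational in `cos θ` with
denominator `D²`; partial fractions give them primitives of the form `A θ` plus a combination of
`sin θ`, `sin θ cos θ`, `sin θ cos³ θ`, `sin θ / D` and `arctan (σ sin θ / (1 - σ cos θ))`, the
last one being a primitive of `σ (cos θ - σ) / D`. All terms but `A θ` vanish at `0` and `π`, so
the integrals over `[0, π]` are `A π`, giving `4π e₁ = (1 + 3σ²)/4` and `4π e₂ = 3(1 - σ²)/4`,
and `E[P₀]`, `E[P_s]` are polynomials in these.
The coefficients of the other terms have powers of `σ` in their denominators, so `σ = 0` needs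
its own (polynomial) primitive.
-/

section

variable {σ : ℝ}

lemma mul_cos_le_abs (σ θ : ℝ) : σ * cos θ ≤ |σ| :=
  (le_abs_self _).trans <| by
    rw [abs_mul]; exact mul_le_of_le_one_right (abs_nonneg σ) (abs_cos_le_one θ)

lemma one_add_sq_sub_two_mul_cos_pos (hσ : |σ| < 1) (θ : ℝ) :
    0 < 1 + σ ^ 2 - 2 * σ * cos θ := by
  nlinarith [mul_cos_le_abs σ θ, sq_abs σ, abs_nonneg σ]

lemma one_sub_mul_cos_pos (hσ : |σ| < 1) (θ : ℝ) : 0 < 1 - σ * cos θ := by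
  linarith [mul_cos_le_abs σ θ]

lemma hasDerivAt_arctan_sin_div (hσ : |σ| < 1) (θ : ℝ) :
    HasDerivAt (fun t => arctan (σ * sin t / (1 - σ * cos t)))
      (σ * (cos θ - σ) / (1 + σ ^ 2 - 2 * σ * cos θ)) θ := by
  have hg := (one_sub_mul_cos_pos hσ θ).ne'
  have hD := (one_add_sq_sub_two_mul_cos_pos hσ θ).ne'
  have hquot := ((hasDerivAt_sin θ).const_mul σ).div
    (((hasDerivAt_cos θ).const_mul σ).const_sub 1) hg
  have hsq : 1 + (σ * sin θ / (1 - σ * cos θ)) ^ 2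
      = (1 + σ ^ 2 - 2 * σ * cos θ) / (1 - σ * cos θ) ^ 2 := by
    field_simp; linear_combination σ ^ 2 * sin_sq_add_cos_sq θ
  refine hquot.arctan.congr_deriv ?_
  simp only [Pi.div_apply, hsq]
  field_simp
  congr 1
  linear_combination -σ ^ 2 * sin_sq_add_cos_sq θ

lemma hasDerivAt_sin_div (hσ : |σ| < 1) (θ : ℝ) :
    HasDerivAt (fun t => sin t / (1 + σ ^ 2 - 2 * σ * cos t))
      ((cos θ * (1 + σ ^ 2) - 2 * σ) / (1 + σ ^ 2 - 2 * σ * cos θ) ^ 2) θ := by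
  have hD := (one_add_sq_sub_two_mul_cos_pos hσ θ).ne'
  refine ((hasDerivAt_sin θ).div
    (((hasDerivAt_cos θ).const_mul (2 * σ)).const_sub (1 + σ ^ 2)) hD).congr_deriv ?_
  congr 1
  linear_combination (-2 * σ) * sin_sq_add_cos_sq θ

noncomputable def normalPrimitive (σ A B C E H Q t : ℝ) : ℝ :=
  A * t + B * sin t + C * (sin t * cos t) + E * arctan (σ * sin t / (1 - σ * cos t))
    + H * (sin t / (1 + σ ^ 2 - 2 * σ * cos t)) + Q * (sin t * cos t ^ 3)

noncomputable def normalPrimitiveDeriv (σ A B C E H Q θ : ℝ) : ℝ :=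
  A + B * cos θ + C * (2 * cos θ ^ 2 - 1) + E * (σ * (cos θ - σ) / (1 + σ ^ 2 - 2 * σ * cos θ))
    + H * ((cos θ * (1 + σ ^ 2) - 2 * σ) / (1 + σ ^ 2 - 2 * σ * cos θ) ^ 2)
    + Q * (4 * cos θ ^ 4 - 3 * cos θ ^ 2)

variable (A B C E H Q : ℝ)

lemma hasDerivAt_normalPrimitive (hσ : |σ| < 1) (θ : ℝ) :
    HasDerivAt (normalPrimitive σ A B C E H Q) (normalPrimitiveDeriv σ A B C E H Q θ) θ := by
  have hsc : HasDerivAt (fun t => sin t * cos t) (2 * cos θ ^ 2 - 1) θ :=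
    ((hasDerivAt_sin θ).mul (hasDerivAt_cos θ)).congr_deriv <| by
      linear_combination -sin_sq_add_cos_sq θ
  have hsc3 : HasDerivAt (fun t => sin t * cos t ^ 3) (4 * cos θ ^ 4 - 3 * cos θ ^ 2) θ :=
    ((hasDerivAt_sin θ).mul ((hasDerivAt_cos θ).fun_pow 3)).congr_deriv <| by
      push_cast; linear_combination (-3 * cos θ ^ 2) * sin_sq_add_cos_sq θ
  exact (((((hasDerivAt_const_mul A).add
    ((hasDerivAt_sin θ).const_mul B)).add (hsc.const_mul C)).add
    ((hasDerivAt_arctan_sin_div hσ θ).const_mul E)).add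
    ((hasDerivAt_sin_div hσ θ).const_mul H)).add (hsc3.const_mul Q)

lemma integral_eq_of_eq_normalPrimitiveDeriv (hσ : |σ| < 1) {f : ℝ → ℝ}
    (hf : ∀ θ, f θ = normalPrimitiveDeriv σ A B C E H Q θ) :
    ∫ θ in (0)..π, f θ = A * π := by
  have hcont : Continuous (normalPrimitiveDeriv σ A B C E H Q) := by
    have hD := fun θ => (one_add_sq_sub_two_mul_cos_pos hσ θ).ne'
    unfold normalPrimitiveDeriv
    fun_prop (disch := simp [hD])
  rw [funext hf, intervalIntegral.integral_eq_sub_of_hasDerivAt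
    (fun θ _ => hasDerivAt_normalPrimitive A B C E H Q hσ θ) (hcont.intervalIntegrable 0 π)]
  simp [normalPrimitive]

end

lemma e₁_eq {σ : ℝ} (hσ : |σ| < 1) : e₁ σ = (1 + 3 * σ ^ 2) / (16 * π) := by
  suffices ∃ B C E H Q, ∀ θ, normalDensity σ θ * (cos θ ^ 2 * sin θ ^ 2)
      = normalPrimitiveDeriv σ ((1 + 3 * σ ^ 2) / (16 * π ^ 2)) B C E H Q θ by
    obtain ⟨B, C, E, H, Q, h⟩ := this
    rw [e₁, integral_eq_of_eq_normalPrimitiveDeriv _ B C E H Q hσ h]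
    field_simp
  rcases eq_or_ne σ 0 with rfl | hσ0
  · refine ⟨0, 1 / (16 * π ^ 2), 0, 0, -(1 / (8 * π ^ 2)), fun θ => ?_⟩
    unfold normalDensity normalPrimitiveDeriv
    rw [sin_sq]
    field_simp
    ring
  · refine ⟨-((1 - σ ^ 2) * (1 + σ ^ 2) / (8 * π ^ 2 * σ ^ 3)), -((1 - σ ^ 2) / (16 * π ^ 2 * σ ^ 2)),
      (1 + σ ^ 2) * (3 - 2 * σ ^ 2 + 3 * σ ^ 4) / (16 * π ^ 2 * σ ^ 4),
      -((1 - σ ^ 2) * (1 + σ ^ 2) ^ 2 / (16 * π ^ 2 * σ ^ 3)), 0, fun θ => ?_⟩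
    have hD := (one_add_sq_sub_two_mul_cos_pos hσ θ).ne'
    unfold normalDensity normalPrimitiveDeriv
    rw [sin_sq]
    field_simp
    ring

lemma e₂_eq {σ : ℝ} (hσ : |σ| < 1) : e₂ σ = 3 * (1 - σ ^ 2) / (16 * π) := by
  suffices ∃ B C E H Q, ∀ θ, normalDensity σ θ * sin θ ^ 4
      = normalPrimitiveDeriv σ (3 * (1 - σ ^ 2) / (16 * π ^ 2)) B C E H Q θ by
    obtain ⟨B, C, E, H, Q, h⟩ := this
    rw [e₂, integral_eq_of_eq_normalPrimitiveDeriv _ B C E H Q hσ h]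
    field_simp
  rcases eq_or_ne σ 0 with rfl | hσ0
  · refine ⟨0, -(5 / (16 * π ^ 2)), 0, 0, 1 / (8 * π ^ 2), fun θ => ?_⟩
    unfold normalDensity normalPrimitiveDeriv
    rw [show sin θ ^ 4 = (sin θ ^ 2) ^ 2 by ring, sin_sq]
    field_simp
    ring
  · refine ⟨(1 - σ ^ 2) * (1 + σ ^ 2) / (8 * π ^ 2 * σ ^ 3), (1 - σ ^ 2) / (16 * π ^ 2 * σ ^ 2),
      -(3 * (1 + σ ^ 2) * (1 - σ ^ 2) ^ 2 / (16 * π ^ 2 * σ ^ 4)),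
      (1 - σ ^ 2) ^ 3 / (16 * π ^ 2 * σ ^ 3), 0, fun θ => ?_⟩
    have hD := (one_add_sq_sub_two_mul_cos_pos hσ θ).ne'
    unfold normalDensity normalPrimitiveDeriv
    rw [show sin θ ^ 4 = (sin θ ^ 2) ^ 2 by ring, sin_sq]
    field_simp
    ring

theorem syndrome_probabilities_normal (σ : ℝ) (hσ : σ ∈ Set.Ico (0:ℝ) 1) :
    EP0 σ = (1 + 15 * σ ^ 8) / 16 ∧
    EPs σ = (1 - σ ^ 8) / 16 ∧
    EP0 σ + 15 * EPs σ = 1 := by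
  have hσ' : |σ| < 1 := abs_lt.2 ⟨by linarith [hσ.1], hσ.2⟩
  have hP0 : EP0 σ = (1 + 15 * σ ^ 8) / 16 := by
    rw [EP0, e₁_eq hσ', e₂_eq hσ']
    field_simp
    ring
  have hPs : EPs σ = (1 - σ ^ 8) / 16 := by
    rw [EPs, e₁_eq hσ', e₂_eq hσ']
    field_simp
    ring
  exact ⟨hP0, hPs, by rw [hP0, hPs]; ring⟩
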